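/- Let p ≥ 1, κ, θ, ν, Y₀, T > 0, and let n ∈ ℕ satisfy n > 2·(8θ)^p·T^{p−1}. Let B : [0, T] → ℝ be a bounded function with B(0) = 0 and let Ŷ₀, Ŷ₁, …, Ŷₙ be the inverse Euler approximations on the equidistant partition tₖ = kT/n driven by the increments of B. Then for every k with 0 ≤ k ≤ n: (Ŷₖ)^p ≤ 2·((4Y₀)^p + (8κT/Y₀)^p + (8ν)^p · sup_{s∈[0,T]}|B(s)|^p)·exp(2·(8θT)^p). -/
import Mathlib
set_option maxHeartbeats 1000000


/-- One step of the inverse (drift-implicit) Euler scheme. -/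
noncomputable def invEulerStep (κ θ ν Δ y b : ℝ) : ℝ :=
  (y + ν / 2 * b + Real.sqrt ((y + ν / 2 * b) ^ 2 + κ * Δ * (2 + θ * Δ))) / (2 + θ * Δ)

/-- The inverse Euler approximations `Ŷₖ` on the equidistant partition `tₖ = kT/n`
of `[0,T]`, driven by the increments of `B`, started from `Y₀`. -/
noncomputable def invEulerSeq (κ θ ν Y₀ T : ℝ) (n : ℕ) (B : ℝ → ℝ) : ℕ → ℝ
  | 0 => Y₀
  | k + 1 =>
      invEulerStep κ θ ν (T / n) (invEulerSeq κ θ ν Y₀ T n B k)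
        (B (((k : ℝ) + 1) * T / n) - B ((k : ℝ) * T / n))

lemma invEulerStep_pos (κ θ ν Δ y b : ℝ) (hκ : 0 < κ) (hθ : 0 < θ) (hΔ : 0 < Δ) :
    0 < invEulerStep κ θ ν Δ y b := by
  unfold invEulerStep
  have hc : 0 < κ * Δ * (2 + θ * Δ) := by positivity
  have h1 : |y + ν / 2 * b| < Real.sqrt ((y + ν / 2 * b) ^ 2 + κ * Δ * (2 + θ * Δ)) := by
    rw [← Real.sqrt_sq_eq_abs]
    exact Real.sqrt_lt_sqrt (sq_nonneg _) (by linarith)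
  have h2 : -(y + ν / 2 * b) ≤ |y + ν / 2 * b| := neg_le_abs _
  have hd : (0:ℝ) < 2 + θ * Δ := by positivity
  apply div_pos _ hd
  linarith

lemma invEulerStep_le (κ θ ν Δ y b : ℝ) (hκ : 0 < κ) (hθ : 0 < θ) (hΔ : 0 < Δ) :
    invEulerStep κ θ ν Δ y b ≤ y + ν / 2 * b + κ * Δ / (2 * invEulerStep κ θ ν Δ y b) := by
  have hz := invEulerStep_pos κ θ ν Δ y b hκ hθ hΔ
  have hd : (0:ℝ) < 2 + θ * Δ := by positivity
  have hs2 : Real.sqrt ((y + ν / 2 * b) ^ 2 + κ * Δ * (2 + θ * Δ)) ^ 2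
      = (y + ν / 2 * b) ^ 2 + κ * Δ * (2 + θ * Δ) := Real.sq_sqrt (by positivity)
  set s := Real.sqrt ((y + ν / 2 * b) ^ 2 + κ * Δ * (2 + θ * Δ)) with hsdef
  set z := invEulerStep κ θ ν Δ y b with hzdef
  have hzd : z * (2 + θ * Δ) = (y + ν / 2 * b) + s := by
    rw [hzdef]
    unfold invEulerStep
    rw [← hsdef, div_mul_cancel₀ _ hd.ne']
  have h1 : (2 + θ * Δ) * z ^ 2 = 2 * (y + ν / 2 * b) * z + κ * Δ := by
    apply mul_left_cancel₀ hd.ne'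
    linear_combination (z * (2 + θ * Δ) - (y + ν / 2 * b) + s) * hzd + hs2
  have hkey : 2 * z ^ 2 ≤ 2 * (y + ν / 2 * b) * z + κ * Δ := by
    nlinarith [sq_nonneg z, mul_pos hθ hΔ]
  rw [← sub_nonneg]
  have heq : y + ν / 2 * b + κ * Δ / (2 * z) - z
      = (2 * (y + ν / 2 * b) * z + κ * Δ - 2 * z ^ 2) / (2 * z) := by
    field_simp
  rw [heq]
  exact div_nonneg (by linarith) (by linarith)

/-- Grönwall-type uniform moment bound for the inverse Euler approximations of the
fractional CIR volatility process: if `n > 2·(8θ)^p·T^{p−1}`, then for every `k ≤ n`,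
`(Ŷₖ)^p ≤ 2·((4Y₀)^p + (8κT/Y₀)^p + (8ν)^p · sup_{s∈[0,T]}|B(s)|^p)·exp(2(8θT)^p)`. -/
theorem invEuler_gronwall_bound
    (p κ θ ν Y₀ T : ℝ) (n : ℕ) (hp : 1 ≤ p) (hκ : 0 < κ) (hθ : 0 < θ) (hν : 0 < ν)
    (hY₀ : 0 < Y₀) (hT : 0 < T) (hn : (n : ℝ) > 2 * (8 * θ) ^ p * T ^ (p - 1))
    (B : ℝ → ℝ)
    (hBbdd : ∃ M : ℝ, ∀ s ∈ Set.Icc (0 : ℝ) T, |B s| ≤ M) (hB0 : B 0 = 0) :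
    ∀ k : ℕ, k ≤ n →
      (invEulerSeq κ θ ν Y₀ T n B k) ^ p ≤
        2 * ((4 * Y₀) ^ p + (8 * κ * T / Y₀) ^ p
            + (8 * ν) ^ p * sSup ((fun s => |B s| ^ p) '' Set.Icc (0 : ℝ) T))
          * Real.exp (2 * (8 * θ * T) ^ p) := by
  classical
  have hp0 : (0:ℝ) < p := by linarith
  have hn0 : (0:ℝ) < n := by
    have : (0:ℝ) < 2 * (8 * θ) ^ p * T ^ (p - 1) := by positivity
    linarith
  have hnn : n ≠ 0 := by exact_mod_cast hn0.ne'
  have hΔ : (0:ℝ) < T / n := div_pos hT hn0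
  set Y : ℕ → ℝ := invEulerSeq κ θ ν Y₀ T n B with hYdef
  have hrec : ∀ k : ℕ, Y (k + 1)
      = invEulerStep κ θ ν (T / n) (Y k)
          (B (((k : ℝ) + 1) * T / n) - B ((k : ℝ) * T / n)) := fun k => rfl
  have hY0 : Y 0 = Y₀ := rfl
  have hpos : ∀ k, 0 < Y k := by
    intro k
    induction k with
    | zero => exact hY₀
    | succ k ih =>
      rw [hrec]
      exact invEulerStep_pos _ _ _ _ _ _ hκ hθ hΔ
  have hstep : ∀ k : ℕ, Y (k + 1) ≤ Y k
      + ν / 2 * (B (((k : ℝ) + 1) * T / n) - B ((k : ℝ) * T / n))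
      + κ * (T / n) / (2 * Y (k + 1)) := by
    intro k
    have h := invEulerStep_le κ θ ν (T / n) (Y k)
      (B (((k : ℝ) + 1) * T / n) - B ((k : ℝ) * T / n)) hκ hθ hΔ
    rw [← hrec k] at h
    linarith
  -- sup facts
  set S := sSup ((fun s => |B s| ^ p) '' Set.Icc (0 : ℝ) T) with hSdef
  obtain ⟨M, hM⟩ := hBbdd
  have hbdd : BddAbove ((fun s => |B s| ^ p) '' Set.Icc (0 : ℝ) T) := by
    refine ⟨M ^ p, ?_⟩
    rintro _ ⟨t, ht, rfl⟩
    exact Real.rpow_le_rpow (abs_nonneg _) (hM t ht) hp0.le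
  have hS0 : 0 ≤ S := by
    refine le_csSup hbdd ⟨0, ⟨le_refl _, hT.le⟩, ?_⟩
    simp [hB0, Real.zero_rpow hp0.ne']
  set r := S ^ (1 / p) with hrdef
  have hr0 : 0 ≤ r := Real.rpow_nonneg hS0 _
  have hrp : r ^ p = S := by
    rw [hrdef, ← Real.rpow_mul hS0, one_div_mul_cancel hp0.ne', Real.rpow_one]
  have hrB : ∀ t ∈ Set.Icc (0 : ℝ) T, |B t| ≤ r := by
    intro t ht
    by_contra hcon
    push_neg at hcon
    have h1 : |B t| ^ p ≤ S := le_csSup hbdd ⟨t, ht, rfl⟩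
    have h2 : r ^ p < |B t| ^ p := Real.rpow_lt_rpow hr0 hcon hp0
    rw [hrp] at h2
    linarith
  -- telescoping bound
  have tele : ∀ j d : ℕ, (∀ i : ℕ, j < i → i ≤ j + d → Y₀ < Y i) →
      Y (j + d) ≤ Y j + d * (κ * (T / n) / (2 * Y₀))
        + ν / 2 * (B ((↑(j + d) : ℝ) * T / n) - B ((j : ℝ) * T / n)) := by
    intro j d
    induction d with
    | zero => intro _; simp
    | succ d ih =>
      intro h
      have ih' := ih (fun i h1 h2 => h i h1 (by omega))
      have hstep' := hstep (j + d)
      have hlow : Y₀ < Y (j + d + 1) := h _ (by omega) (by omega)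
      have hdiv : κ * (T / n) / (2 * Y (j + d + 1)) ≤ κ * (T / n) / (2 * Y₀) := by
        gcongr <;> first | positivity | linarith
      push_cast at ih' hstep' ⊢
      ring_nf at ih' hstep' hdiv hlow ⊢
      linarith
  -- main uniform bound
  intro k hk
  have hgt : ∀ i : ℕ, Nat.findGreatest (fun i => Y i ≤ Y₀) k < i → i ≤ k → Y₀ < Y i := by
    intro i h1 h2
    exact lt_of_not_ge (Nat.findGreatest_is_greatest h1 h2)
  set j := Nat.findGreatest (fun i => Y i ≤ Y₀) k with hjdef
  have hj_le : j ≤ k := Nat.findGreatest_le k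
  have hPj : Y j ≤ Y₀ := Nat.findGreatest_spec (P := fun i => Y i ≤ Y₀) (Nat.zero_le k) (le_of_eq hY0)
  have hk_eq : j + (k - j) = k := Nat.add_sub_cancel' hj_le
  have hmain := tele j (k - j) (fun i h1 h2 => hgt i h1 (by omega))
  rw [hk_eq] at hmain
  -- bound the pieces
  have hkn : (k : ℝ) ≤ n := by exact_mod_cast hk
  have hjn : (j : ℝ) ≤ n := by
    have : j ≤ n := le_trans hj_le hk
    exact_mod_cast this
  have hmem : ∀ m : ℕ, m ≤ n → ((m : ℝ) * T / n) ∈ Set.Icc (0:ℝ) T := by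
    intro m hm
    constructor
    · positivity
    · rw [div_le_iff₀ hn0]
      have : (m : ℝ) ≤ n := by exact_mod_cast hm
      nlinarith
  have hBk : |B ((k : ℝ) * T / n)| ≤ r := hrB _ (hmem k hk)
  have hBj : |B ((j : ℝ) * T / n)| ≤ r := hrB _ (hmem j (le_trans hj_le hk))
  have hdk : ((k - j : ℕ) : ℝ) ≤ n := by
    have : k - j ≤ n := by omega
    exact_mod_cast this
  have hsum : ((k - j : ℕ) : ℝ) * (κ * (T / n) / (2 * Y₀)) ≤ κ * T / Y₀ := by
    have hterm : 0 ≤ κ * (T / n) / (2 * Y₀) := by positivity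
    have h1 : ((k - j : ℕ) : ℝ) * (κ * (T / n) / (2 * Y₀))
        ≤ (n : ℝ) * (κ * (T / n) / (2 * Y₀)) := by
      apply mul_le_mul_of_nonneg_right hdk hterm
    have h2 : (n : ℝ) * (κ * (T / n) / (2 * Y₀)) = κ * T / (2 * Y₀) := by
      field_simp
    have h3 : κ * T / (2 * Y₀) ≤ κ * T / Y₀ := by
      gcongr <;> first | positivity | linarith
    linarith
  have hBdiff : ν / 2 * (B ((k : ℝ) * T / n) - B ((j : ℝ) * T / n)) ≤ ν * r := by
    have h1 : B ((k : ℝ) * T / n) ≤ r := le_trans (le_abs_self _) hBk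
    have h2 : -r ≤ B ((j : ℝ) * T / n) := neg_le_of_abs_le hBj
    nlinarith
  have key : Y k ≤ Y₀ + κ * T / Y₀ + ν * r := by linarith
  -- conclusion via rpow manipulations
  set m := max (max (4 * Y₀) (8 * κ * T / Y₀)) (8 * (ν * r)) with hmdef
  have hm1 : 4 * Y₀ ≤ m := le_trans (le_max_left _ _) (le_max_left _ _)
  have hm2 : 8 * κ * T / Y₀ ≤ m := le_trans (le_max_right _ _) (le_max_left _ _)
  have hm3 : 8 * (ν * r) ≤ m := le_max_right _ _
  have hYm : Y k ≤ m := by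
    have h82 : 8 * κ * T / Y₀ = 8 * (κ * T / Y₀) := by ring
    rw [h82] at hm2
    linarith
  have hppows : Y k ^ p ≤ m ^ p := Real.rpow_le_rpow (hpos k).le hYm hp0.le
  have hn1 : (0:ℝ) ≤ (4 * Y₀) ^ p := Real.rpow_nonneg (by linarith) _
  have hn2 : (0:ℝ) ≤ (8 * κ * T / Y₀) ^ p := Real.rpow_nonneg (by positivity) _
  have hn3 : (0:ℝ) ≤ (8 * (ν * r)) ^ p := Real.rpow_nonneg (by positivity) _
  have hmp : m ^ p ≤ (4 * Y₀) ^ p + (8 * κ * T / Y₀) ^ p + (8 * (ν * r)) ^ p := by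
    have hcases : m = 4 * Y₀ ∨ m = 8 * κ * T / Y₀ ∨ m = 8 * (ν * r) := by
      rcases max_cases (max (4 * Y₀) (8 * κ * T / Y₀)) (8 * (ν * r)) with ⟨h, _⟩ | ⟨h, _⟩
      · rcases max_cases (4 * Y₀) (8 * κ * T / Y₀) with ⟨h', _⟩ | ⟨h', _⟩
        · left; rw [hmdef, h, h']
        · right; left; rw [hmdef, h, h']
      · right; right; rw [hmdef, h]
    rcases hcases with h | h | h <;> rw [h] <;> linarith
  have hprod : (8 * (ν * r)) ^ p = (8 * ν) ^ p * S := by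
    rw [show 8 * (ν * r) = (8 * ν) * r by ring,
      Real.mul_rpow (by positivity) hr0, hrp]
  have hexp : 1 ≤ Real.exp (2 * (8 * θ * T) ^ p) := by
    apply Real.one_le_exp
    positivity
  have hbr : (0:ℝ) ≤ (4 * Y₀) ^ p + (8 * κ * T / Y₀) ^ p + (8 * ν) ^ p * S := by
    have : (0:ℝ) ≤ (8 * ν) ^ p * S := mul_nonneg (Real.rpow_nonneg (by positivity) _) hS0
    linarith
  have hfin : Y k ^ p ≤ (4 * Y₀) ^ p + (8 * κ * T / Y₀) ^ p + (8 * ν) ^ p * S := by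
    rw [hprod] at hmp
    linarith
  calc Y k ^ p ≤ (4 * Y₀) ^ p + (8 * κ * T / Y₀) ^ p + (8 * ν) ^ p * S := hfin
    _ ≤ 2 * ((4 * Y₀) ^ p + (8 * κ * T / Y₀) ^ p + (8 * ν) ^ p * S)
        * Real.exp (2 * (8 * θ * T) ^ p) := by
      nlinarith [mul_nonneg hbr (by linarith : (0:ℝ) ≤ 2 * Real.exp (2 * (8 * θ * T) ^ p) - 1)]
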